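/- Let z_1, ..., z_n be real numbers with mean z̄ and finite-population variance σ² = (1/(n−1))·∑(z_i − z̄)². Let A ⊂ {1,...,n} be a uniformly random subset of fixed size n_A, with sample mean z̄_A, and set p_A = n_A/n, τ = min{1/70, (3p_A)²/70, (3−3p_A)²/70}. Then for every t > 0, P(z̄_A − z̄ ≥ t) ≤ exp(−p_A·n_A·t² / ((1+τ)²·σ²)). -/

import Mathlib

/-!
Chernoff bound from a sub-Gaussian bound on the moment generating function of the sample sum:
for a population `s` of size `N` with deviation sum of squares `V = ∑ (w i - w̄)²`,
`∑_{|A| = k} exp (λ ∑_{i ∈ A} w i) ≤ (N choose k) · exp (λ k w̄ + λ² V / 4)`.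
This is proved by adding one point `a` at a time: subsets either avoid `a` or contain it, and after
the induction hypothesis the two contributions form Hoeffding's lemma for the two-point distribution
with weights `(N - j)/(N + 1)` and `(j + 1)/(N + 1)`. The resulting factor `exp (x² / 8)` is absorbed
by the growth `V ↦ V + δ² N/(N + 1)` of the deviation sum, as `N/(N + 1) ≥ 1/2`.
Optimising `λ` gives `exp (-n_A² t² / ((n - 1) σ²))`, which is stronger than the stated bound
because `n (1 + τ)² ≥ n - 1`.
-/

open Real Finset

open ProbabilityTheory MeasureTheory in
/-- Hoeffding's lemma for the centred two-point distribution taking `q` with probability `p` and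
`-p` with probability `q`. -/
theorem mul_exp_add_mul_exp_neg_le {p q : ℝ} (hp : 0 ≤ p) (hq : 0 ≤ q) (hpq : p + q = 1)
    (x : ℝ) : p * exp (q * x) + q * exp (-(p * x)) ≤ exp (x ^ 2 / 8) := by
  let P : unitInterval := ⟨p, hp, by linarith⟩
  let X : Bool → ℝ := fun b => if b then q else -p
  have hX : ∀ b, X b ∈ Set.Icc (-p) q := by
    intro b; cases b <;> simp [X] <;> linarith
  have hq' : 1 - p = q := by linarith
  have hmean : ∫ b, X b ∂Ber(true, false, P) = 0 := by
    rw [integral_bernoulliMeasure]; simp [X, P, hq']; ring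
  have h := (hasSubgaussianMGF_of_mem_Icc_of_integral_eq_zero
    (Measurable.of_discrete (f := X)).aemeasurable (ae_of_all _ hX) hmean).mgf_le x
  rw [mgf, integral_bernoulliMeasure] at h
  have hwidth : ((‖q - -p‖₊ / 2) ^ 2 : NNReal) = (1 / 4 : ℝ) := by
    rw [sub_neg_eq_add, add_comm, hpq]; norm_num
  rw [hwidth] at h
  convert h using 1
  · simp [X, P, hq', mul_comm]
  · ring_nf

theorem Nat.cast_choose_eq_choose_succ_mul (N j : ℕ) :
    (N.choose j : ℝ) = (N + 1).choose (j + 1) * ((j + 1) / (N + 1)) := by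
  rw [mul_div_assoc', eq_div_iff (by positivity)]
  exact_mod_cast (mul_comm _ _).trans (Nat.add_one_mul_choose_eq N j)

theorem Nat.cast_choose_succ_eq_choose_succ_mul {N j : ℕ} (hj : j ≤ N) :
    (N.choose (j + 1) : ℝ) = (N + 1).choose (j + 1) * ((N - j) / (N + 1)) := by
  have h := Nat.choose_mul_succ_eq N (j + 1)
  rw [show N + 1 - (j + 1) = N - j by omega] at h
  rw [mul_div_assoc', eq_div_iff (by positivity), ← Nat.cast_sub hj]
  exact_mod_cast h

theorem Finset.sum_powersetCard_succ_insert {α β : Type*} [DecidableEq α] [AddCommMonoid β]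
    {a : α} {s : Finset α} (ha : a ∉ s) (k : ℕ) (f : Finset α → β) :
    ∑ A ∈ powersetCard (k + 1) (insert a s), f A =
      ∑ A ∈ powersetCard (k + 1) s, f A + ∑ B ∈ powersetCard k s, f (insert a B) := by
  rw [powersetCard_succ_insert ha, sum_union, sum_image]
  · exact insert_erase_invOn.2.injOn.mono fun t ht ↦ notMem_mono (mem_powersetCard.1 ht).1 ha
  · aesop (add simp [disjoint_left, insert_subset_iff, mem_powersetCard])

theorem Finset.sum_sub_mean_sq {ι : Type*} (s : Finset ι) (w : ι → ℝ) :
    ∑ i ∈ s, (w i - (∑ j ∈ s, w j) / #s) ^ 2 = ∑ i ∈ s, w i ^ 2 - (∑ i ∈ s, w i) ^ 2 / #s := by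
  rcases s.eq_empty_or_nonempty with rfl | hs
  · simp
  have hN : (#s : ℝ) ≠ 0 := by simp [hs.ne_empty]
  simp only [sub_sq, sum_add_distrib, sum_sub_distrib, ← sum_mul, ← mul_sum, sum_const,
    nsmul_eq_mul]
  field_simp
  ring

theorem Finset.card_filter_mul_exp_le_sum_exp {α : Type*} (𝒜 : Finset α) (f : α → ℝ) {lam : ℝ}
    (hlam : 0 ≤ lam) (a : ℝ) :
    #(𝒜.filter (a ≤ f ·)) * exp (lam * a) ≤ ∑ A ∈ 𝒜, exp (lam * f A) := by
  rw [← nsmul_eq_mul]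
  calc #(𝒜.filter (a ≤ f ·)) • exp (lam * a) ≤ ∑ A ∈ 𝒜.filter (a ≤ f ·), exp (lam * f A) :=
        card_nsmul_le_sum _ _ _ fun A hA ↦ by
          gcongr; exact (mem_filter.1 hA).2
    _ ≤ ∑ A ∈ 𝒜, exp (lam * f A) :=
        sum_le_sum_of_subset_of_nonneg (filter_subset _ _) fun _ _ _ ↦ (exp_pos _).le

/-- The inductive step of `Finset.sum_powersetCard_exp_mul_sum_le`, for a population of `N` points
with sum `T` and sum of squares `Q` to which a point `a` is added; the weights are
`choose N (j + 1) / choose (N + 1) (j + 1)` and `choose N j / choose (N + 1) (j + 1)`. -/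
theorem exp_mgf_bound_insert_le (lam a T Q : ℝ) {N j : ℕ} (hN : 0 < N) (hj : j ≤ N) :
    (N - j) / (N + 1) * exp (lam * (j + 1) * (T / N) + lam ^ 2 * (Q - T ^ 2 / N) / 4) +
      (j + 1) / (N + 1) *
        (exp (lam * a) * exp (lam * j * (T / N) + lam ^ 2 * (Q - T ^ 2 / N) / 4))
      ≤ exp (lam * (j + 1) * ((a + T) / (N + 1)) +
          lam ^ 2 * (a ^ 2 + Q - (a + T) ^ 2 / (N + 1)) / 4) := by
  have hN : (1 : ℝ) ≤ N := by exact_mod_cast hN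
  have hj : (j : ℝ) ≤ N := by exact_mod_cast hj
  set p : ℝ := (j + 1) / (N + 1) with hp
  set q : ℝ := (N - j) / (N + 1) with hq
  set δ := a - T / N with hδ
  set x := lam * δ with hx
  set E := exp (lam * (j + 1) * ((a + T) / (N + 1)) + lam ^ 2 * (Q - T ^ 2 / N) / 4)
  have hpq : p + q = 1 := by rw [hp, hq]; field_simp; ring
  have hfirst : exp (lam * (j + 1) * (T / N) + lam ^ 2 * (Q - T ^ 2 / N) / 4) =
      exp (-(p * x)) * E := by
    rw [← exp_add, hp, hx, hδ]; congr 1; field_simp; ring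
  have hsecond : exp (lam * a) * exp (lam * j * (T / N) + lam ^ 2 * (Q - T ^ 2 / N) / 4) =
      exp (q * x) * E := by
    rw [← exp_add, ← exp_add, hq, hx, hδ]; congr 1; field_simp; ring
  have hxsq : x ^ 2 / 8 ≤ lam ^ 2 * (δ ^ 2 * N / (N + 1)) / 4 := by
    have : (1 : ℝ) / 2 ≤ N / (N + 1) := by
      rw [div_le_div_iff₀ (by norm_num) (by positivity)]; linarith
    calc x ^ 2 / 8 = (lam * δ) ^ 2 * (1 / 2) / 4 := by ring
      _ ≤ (lam * δ) ^ 2 * (N / (N + 1)) / 4 := by gcongr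
      _ = _ := by ring
  have hV : Q - T ^ 2 / N + δ ^ 2 * N / (N + 1) = a ^ 2 + Q - (a + T) ^ 2 / (N + 1) := by
    rw [hδ]; field_simp; ring
  calc q * exp (lam * (j + 1) * (T / N) + lam ^ 2 * (Q - T ^ 2 / N) / 4) +
        p * (exp (lam * a) * exp (lam * j * (T / N) + lam ^ 2 * (Q - T ^ 2 / N) / 4))
      = (p * exp (q * x) + q * exp (-(p * x))) * E := by rw [hfirst, hsecond]; ring
    _ ≤ exp (x ^ 2 / 8) * E := by
        gcongr
        exact mul_exp_add_mul_exp_neg_le (by positivity)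
          (div_nonneg (by linarith) (by positivity)) hpq x
    _ ≤ exp (lam ^ 2 * (δ ^ 2 * N / (N + 1)) / 4) * E := by gcongr
    _ = _ := by rw [← exp_add, ← hV]; ring_nf

theorem Finset.sum_powersetCard_exp_mul_sum_le {ι : Type*} [DecidableEq ι] (lam : ℝ)
    (w : ι → ℝ) (s : Finset ι) (k : ℕ) :
    ∑ A ∈ powersetCard k s, exp (lam * ∑ i ∈ A, w i) ≤
      (#s).choose k * exp (lam * k * ((∑ i ∈ s, w i) / #s) +
        lam ^ 2 * (∑ i ∈ s, w i ^ 2 - (∑ i ∈ s, w i) ^ 2 / #s) / 4) := by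
  induction s using Finset.induction_on generalizing k with
  | empty =>
    rcases k with _ | j
    · simp
    · rw [powersetCard_eq_empty.2 (by simp), sum_empty]; positivity
  | @insert a s ha ih =>
    rcases k with _ | j
    · rw [← sum_sub_mean_sq]
      simpa using one_le_exp (by positivity)
    rcases Nat.lt_or_ge #s j with hj | hj
    · rw [powersetCard_eq_empty.2 (by rw [card_insert_of_notMem ha]; omega), sum_empty]
      positivity
    rcases s.eq_empty_or_nonempty with rfl | hs
    · obtain rfl : j = 0 := by simpa using hj
      simp [powersetCard_one]
    have hins : ∑ B ∈ powersetCard j s, exp (lam * ∑ i ∈ insert a B, w i) =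
        exp (lam * w a) * ∑ B ∈ powersetCard j s, exp (lam * ∑ i ∈ B, w i) := by
      rw [mul_sum]
      refine sum_congr rfl fun B hB ↦ ?_
      rw [sum_insert fun h ↦ ha ((mem_powersetCard.1 hB).1 h), mul_add, exp_add]
    rw [sum_powersetCard_succ_insert ha, hins, card_insert_of_notMem ha, sum_insert ha,
      sum_insert ha]
    calc _ ≤ (#s).choose (j + 1) * exp (lam * (j + 1 : ℕ) * ((∑ i ∈ s, w i) / #s) +
            lam ^ 2 * (∑ i ∈ s, w i ^ 2 - (∑ i ∈ s, w i) ^ 2 / #s) / 4) +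
          exp (lam * w a) * ((#s).choose j * exp (lam * j * ((∑ i ∈ s, w i) / #s) +
            lam ^ 2 * (∑ i ∈ s, w i ^ 2 - (∑ i ∈ s, w i) ^ 2 / #s) / 4)) := by
          gcongr
          exacts [ih (j + 1), ih j]
      _ = (#s + 1).choose (j + 1) * ((#s - j) / (#s + 1) *
            exp (lam * (j + 1) * ((∑ i ∈ s, w i) / #s) +
              lam ^ 2 * (∑ i ∈ s, w i ^ 2 - (∑ i ∈ s, w i) ^ 2 / #s) / 4) +
          (j + 1) / (#s + 1) * (exp (lam * w a) * exp (lam * j * ((∑ i ∈ s, w i) / #s) +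
              lam ^ 2 * (∑ i ∈ s, w i ^ 2 - (∑ i ∈ s, w i) ^ 2 / #s) / 4))) := by
          rw [Nat.cast_choose_succ_eq_choose_succ_mul hj, Nat.cast_choose_eq_choose_succ_mul #s j]
          push_cast
          ring
      _ ≤ _ := by
          push_cast
          gcongr
          exact exp_mgf_bound_insert_le lam (w a) _ _ hs.card_pos hj

theorem Finset.card_powersetCard_sum_ge_le {ι : Type*} [DecidableEq ι] (s : Finset ι) (k : ℕ)
    (w : ι → ℝ) {t : ℝ} (ht : 0 ≤ t) :
    #((powersetCard k s).filter (k * ((∑ i ∈ s, w i) / #s) + t ≤ ∑ i ∈ ·, w i)) ≤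
      (#s).choose k * exp (-t ^ 2 / ∑ i ∈ s, (w i - (∑ j ∈ s, w j) / #s) ^ 2) := by
  set m := (∑ i ∈ s, w i) / #s
  set V := ∑ i ∈ s, (w i - m) ^ 2
  -- `V = 0` gives `lam = 0` and the trivial bound; the identity below holds in that case too.
  set lam := 2 * t / V
  have hmarkov := card_filter_mul_exp_le_sum_exp (powersetCard k s) (∑ i ∈ ·, w i)
    (by positivity : 0 ≤ lam) (k * m + t)
  have hmgf := sum_powersetCard_exp_mul_sum_le lam w s k
  have hexponent : lam * k * m + lam ^ 2 * V / 4 = lam * (k * m + t) + -t ^ 2 / V := by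
    rcases eq_or_ne V 0 with hV | hV
    · simp [lam, hV]
    · simp only [lam]; field_simp; ring
  rw [← sum_sub_mean_sq, hexponent, exp_add, mul_comm (exp _), ← mul_assoc] at hmgf
  exact le_of_mul_le_mul_right (hmarkov.trans hmgf) (exp_pos _)

theorem div_div_mul_div_sub_one_le {X V c n : ℝ} (hX : 0 ≤ X) (hV : 0 ≤ V) (hc : 1 ≤ c)
    (hn : 1 < n) : X / n / (c * (V / (n - 1))) ≤ X / V :=
  calc X / n / (c * (V / (n - 1))) = X / V * ((n - 1) / n / c) := by
        rw [mul_div_assoc', div_div_eq_mul_div]; ring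
    _ ≤ X / V * 1 := by
        gcongr
        rw [div_div, div_le_one (by positivity)]
        nlinarith
    _ = X / V := mul_one _

theorem stmt16_general (n nA : ℕ) (hn : 2 ≤ n) (hnA : 0 < nA)
    (z : Fin n → ℝ) (t : ℝ) (ht : 0 < t) :
    (((Finset.powersetCard nA (Finset.univ : Finset (Fin n))).filter
          (fun A => t ≤ (1 / (nA : ℝ)) * (∑ i ∈ A, z i) -
            (1 / (n : ℝ)) * ∑ i, z i)).card : ℝ) /
        ((Finset.powersetCard nA (Finset.univ : Finset (Fin n))).card : ℝ) ≤
      Real.exp (-(((nA : ℝ) / n) * nA * t ^ 2) /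
        ((1 + min (1 / 70) (min ((3 * ((nA : ℝ) / n)) ^ 2 / 70)
              ((3 - 3 * ((nA : ℝ) / n)) ^ 2 / 70))) ^ 2 *
          ((1 / ((n : ℝ) - 1)) *
            ∑ i, (z i - (1 / (n : ℝ)) * ∑ j, z j) ^ 2))) := by
  have hk : (0 : ℝ) < nA := by exact_mod_cast hnA
  have hn1 : (1 : ℝ) < n := by exact_mod_cast hn
  simp only [one_div_mul_eq_div]
  set τ := min (1 / 70) (min ((3 * ((nA : ℝ) / n)) ^ 2 / 70) ((3 - 3 * ((nA : ℝ) / n)) ^ 2 / 70))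
  have hτ : 1 ≤ (1 + τ) ^ 2 :=
    one_le_pow₀ (le_add_of_nonneg_right (le_min (by norm_num) (le_min (by positivity)
      (by positivity))))
  have hevent : ∀ A ∈ powersetCard nA univ, t ≤ (∑ i ∈ A, z i) / nA - (∑ i, z i) / n ↔
      nA * ((∑ i, z i) / #(univ : Finset (Fin n))) + nA * t ≤ ∑ i ∈ A, z i := by
    intro A _
    rw [card_univ, Fintype.card_fin, le_sub_iff_add_le, le_div_iff₀ hk]
    constructor <;> intro h <;> linarith
  have hbound := card_powersetCard_sum_ge_le univ nA z (by positivity : 0 ≤ nA * t)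
  rw [← filter_congr hevent, card_univ, Fintype.card_fin] at hbound
  rw [card_powersetCard, card_univ, Fintype.card_fin]
  refine div_le_of_le_mul₀ (by positivity) (by positivity) (hbound.trans ?_)
  rw [mul_comm (exp _)]
  refine mul_le_mul_of_nonneg_left ?_ (by positivity)
  rw [exp_le_exp, neg_div, neg_div, neg_le_neg_iff,
    show (nA / n * nA * t ^ 2 : ℝ) = (nA * t) ^ 2 / n by ring]
  exact div_div_mul_div_sub_one_le (by positivity) (by positivity) hτ hn1

/-- Concentration inequality for simple random sampling without replacement
(Bloniarz et al. 2016): the proportion of size-`nA` subsets whose sample mean exceeds the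
population mean by at least `t` is bounded by `exp(−p_A·n_A·t²/((1+τ)²σ²))`. -/
theorem stmt16 (n nA : ℕ) (hn : 2 ≤ n) (hnA : 0 < nA) (hle : nA ≤ n)
    (z : Fin n → ℝ) (t : ℝ) (ht : 0 < t) :
    (((Finset.powersetCard nA (Finset.univ : Finset (Fin n))).filter
          (fun A => t ≤ (1 / (nA : ℝ)) * (∑ i ∈ A, z i) -
            (1 / (n : ℝ)) * ∑ i, z i)).card : ℝ) /
        ((Finset.powersetCard nA (Finset.univ : Finset (Fin n))).card : ℝ) ≤
      Real.exp (-(((nA : ℝ) / n) * nA * t ^ 2) /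
        ((1 + min (1 / 70) (min ((3 * ((nA : ℝ) / n)) ^ 2 / 70)
              ((3 - 3 * ((nA : ℝ) / n)) ^ 2 / 70))) ^ 2 *
          ((1 / ((n : ℝ) - 1)) *
            ∑ i, (z i - (1 / (n : ℝ)) * ∑ j, z j) ^ 2))) :=
  stmt16_general n nA hn hnA z t ht
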